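/- If n is a positive integer such that n and φ(n) are coprime, then every group with exactly n elements is cyclic. -/

import Mathlib

/-!
Coprimality of `n` and `φ(n)` forces `n` to be squarefree, so `G` is a Z-group: all its Sylow
subgroups are cyclic. The commutator subgroup of a finite Z-group is cyclic, so the image of the
conjugation action of `G` on it has order dividing both `n` and `φ(|G'|) ∣ φ(n)`, hence is trivial:
`G'` is central. Then `G / Z(G)` is a quotient of the cyclic abelianization, so `G` is abelian,
and an abelian Z-group is cyclic.
-/

open Nat Subgroup

theorem Nat.squarefree_of_coprime_totient {n : ℕ} (h : n.Coprime (φ n)) : Squarefree n := by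
  refine Nat.squarefree_iff_prime_squarefree.2 fun p hp hpp => hp.one_lt.ne' ?_
  have hp_dvd_totient : p ∣ φ (p * p) := by
    simp [← sq, Nat.totient_prime_pow hp two_pos]
  exact Nat.eq_one_of_dvd_coprimes h (dvd_of_mul_left_dvd hpp)
    (hp_dvd_totient.trans (Nat.totient_dvd_of_dvd hpp))

theorem MonoidHom.eq_one_of_coprime_card {G H : Type*} [Group G] [Group H] (f : G →* H)
    (h : (Nat.card G).Coprime (Nat.card H)) : f = 1 :=
  MonoidHom.range_eq_bot_iff.1 <| Subgroup.card_eq_one.1 <|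
    Nat.eq_one_of_dvd_coprimes h (card_range_dvd f) f.range.card_subgroup_dvd_card

theorem Subgroup.le_center_of_coprime_card_mulAut {G : Type*} [Group G] (N : Subgroup G)
    [N.Normal] (h : (Nat.card G).Coprime (Nat.card (MulAut N))) : N ≤ center G := by
  intro x hx
  refine Subgroup.mem_center_iff.2 fun g => ?_
  have hconj : g * x * g⁻¹ = x := by
    simpa [MulAut.conjNormal_apply] using
      congrArg Subtype.val (DFunLike.congr_fun
        (DFunLike.congr_fun (MulAut.conjNormal.eq_one_of_coprime_card h) g) ⟨x, hx⟩)
  rw [← hconj, inv_mul_cancel_right, hconj]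

theorem IsZGroup.isCyclic_of_commutator_le_center {G : Type*} [Group G] [Finite G] [IsZGroup G]
    (h : commutator G ≤ center G) : IsCyclic G :=
  letI : CommGroup G := commGroupOfCyclicCenterQuotient Abelianization.of
    (Abelianization.ker_of (G := G) ▸ h)
  IsCyclic.of_exponent_eq_card (IsZGroup.exponent_eq_card G)

theorem isCyclic_of_coprime_totient_general (n : ℕ)
    (hcop : Nat.Coprime n (Nat.totient n))
    (G : Type) [Group G] [Fintype G] (hG : Fintype.card G = n) :
    IsCyclic G := by
  have hcard : Nat.card G = n := Nat.card_eq_fintype_card.trans hG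
  have : IsZGroup G := .of_squarefree (hcard ▸ Nat.squarefree_of_coprime_totient hcop)
  have : IsCyclic (commutator G) := IsZGroup.isCyclic_commutator G
  refine IsZGroup.isCyclic_of_commutator_le_center (le_center_of_coprime_card_mulAut _ ?_)
  rw [IsCyclic.card_mulAut, hcard]
  exact hcop.coprime_dvd_right (Nat.totient_dvd_of_dvd (hcard ▸ card_subgroup_dvd_card _))

/-- If `n` is a positive integer such that `n` and `φ(n)` are coprime, then every
group with exactly `n` elements is cyclic. -/
theorem isCyclic_of_coprime_totient (n : ℕ) (hn : 0 < n)
    (hcop : Nat.Coprime n (Nat.totient n))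
    (G : Type) [Group G] [Fintype G] (hG : Fintype.card G = n) :
    IsCyclic G :=
  isCyclic_of_coprime_totient_general n hcop G hG
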